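/- arXiv:2409.14405 — 3 statements merged into one kernel-verified Lean document; each statement's English description precedes it below -/
import Mathlib

section
/- If Σ_{i=1}^∞ i β_i < ∞, then for every n ≥ 1 the random variable ζ_n = (Σ_{j=1}^∞ β_j) H_n − Σ_{i=1}^{n−1} Σ_{j=1}^{n−i} β_j ξ_i satisfies 0 ≤ ζ_n ≤ Σ_{j=1}^∞ j β_j almost surely. -/
/-!
With the tails `T k = ∑_{j > k} β j`, the coefficient of `ξ i` in `ζ n` is `T (n - i)`, so
`ζ n = ∑_{i=1}^n T (n - i) ξ i`. As `ξ i ∈ {0, 1}` and `T ≥ 0`, this lies between `0` and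
`∑_{k < n} T k`, and exchanging the order of summation bounds the latter by `∑ j, j β j`.
-/

open MeasureTheory Filter Finset

noncomputable def tailSum (f : ℕ → ℝ) (k : ℕ) : ℝ := ∑' j, f (j + k + 1)

section tailSum

variable {f : ℕ → ℝ}

theorem hasSum_ite_lt_tailSum (hf : Summable f) (k : ℕ) :
    HasSum (fun j => if k < j then f j else 0) (tailSum f k) := by
  refine (hasSum_nat_add_iff' (k + 1)).mp ?_
  have hzero : ∑ j ∈ range (k + 1), (if k < j then f j else 0) = 0 :=
    sum_eq_zero fun j hj => if_neg (by simp at hj; omega)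
  rw [hzero, sub_zero]
  convert ((summable_nat_add_iff (k + 1)).2 hf).hasSum using 1
  · exact funext fun j => if_pos (by omega)
  · simp only [tailSum, add_assoc]

theorem sum_Icc_one_add_tailSum (hf : Summable f) (k : ℕ) :
    ∑ j ∈ Icc 1 k, f j + tailSum f k = ∑' j, f (j + 1) := by
  have := ((summable_nat_add_iff 1).2 hf).sum_add_tsum_nat_add k
  rw [range_eq_Ico, sum_Ico_add' f, zero_add, Ico_add_one_right_eq_Icc] at this
  simpa only [tailSum, add_zero, add_right_comm _ k 1] using this

theorem tsum_mul_sum_sub_sum_eq_sum_tailSum_mul (hf : Summable f) (x : ℕ → ℝ) {n : ℕ}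
    (hn : 1 ≤ n) :
    (∑' j, f (j + 1)) * ∑ i ∈ Icc 1 n, x i
        - ∑ i ∈ Icc 1 (n - 1), ∑ j ∈ Icc 1 (n - i), f j * x i
      = ∑ i ∈ Icc 1 n, tailSum f (n - i) * x i := by
  obtain ⟨m, rfl⟩ := Nat.exists_eq_add_of_le' hn
  have hextend : ∑ i ∈ Icc 1 m, ∑ j ∈ Icc 1 (m + 1 - i), f j * x i
      = ∑ i ∈ Icc 1 (m + 1), ∑ j ∈ Icc 1 (m + 1 - i), f j * x i := by
    simp [sum_Icc_succ_top (Nat.le_add_left 1 m)]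
  rw [Nat.add_sub_cancel, hextend, mul_sum, ← sum_sub_distrib]
  refine sum_congr rfl fun i _ => ?_
  rw [← sum_mul, ← sub_mul, ← sum_Icc_one_add_tailSum hf (m + 1 - i), add_sub_cancel_left]

theorem tailSum_nonneg (hf : ∀ j, 0 ≤ f j) (k : ℕ) : 0 ≤ tailSum f k :=
  tsum_nonneg fun _ => hf _

theorem sum_range_tailSum_le (hf0 : ∀ j, 0 ≤ f j) (hf : Summable f)
    (hmoment : Summable fun j : ℕ => (j : ℝ) * f j) (n : ℕ) :
    ∑ k ∈ range n, tailSum f k ≤ ∑' j : ℕ, (j : ℝ) * f j := by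
  refine hasSum_le (fun j => ?_) (hasSum_sum fun k _ => hasSum_ite_lt_tailSum hf k)
    hmoment.hasSum
  calc ∑ k ∈ range n, (if k < j then f j else 0)
      = ∑ k ∈ range n with k < j, f j := (sum_filter _ _).symm
    _ ≤ ∑ k ∈ range j, f j :=
        sum_le_sum_of_subset_of_nonneg (fun k hk => by simp at hk ⊢; omega)
          fun _ _ _ => hf0 j
    _ = j * f j := by simp

end tailSum

theorem sum_Icc_one_sub_eq_sum_range {M : Type*} [AddCommMonoid M] (g : ℕ → M) (n : ℕ) :
    ∑ i ∈ Icc 1 n, g (n - i) = ∑ k ∈ range n, g k :=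
  sum_nbij' (fun i => n - i) (fun k => n - k) (by simp; omega) (by simp; omega)
    (by simp; omega) (by simp; omega) fun _ _ => rfl

theorem stmt4_general
    {Ω : Type*} [MeasurableSpace Ω] (P : Measure Ω)
    (β : ℕ → ℝ) (hβpos : ∀ i, 0 < β i)
    (hβsummable : Summable β)
    (hmoment : Summable fun i : ℕ => (i : ℝ) * β i)
    (ξ : ℕ → Ω → ℝ)
    (hξ01 : ∀ n ω, ξ n ω = 0 ∨ ξ n ω = 1)
    (H : ℕ → Ω → ℝ) (hH : ∀ n ω, H n ω = ∑ i ∈ Finset.Icc 1 n, ξ i ω)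
    (ζ : ℕ → Ω → ℝ)
    (hζ : ∀ n ω, ζ n ω = (∑' j, β (j + 1)) * H n ω
      - ∑ i ∈ Finset.Icc 1 (n - 1), ∑ j ∈ Finset.Icc 1 (n - i), β j * ξ i ω) :
    ∀ n, 1 ≤ n → ∀ᵐ ω ∂P, 0 ≤ ζ n ω ∧ ζ n ω ≤ ∑' j : ℕ, (j : ℝ) * β j := by
  intro n hn
  refine ae_of_all _ fun ω => ?_
  have hβ : ∀ i, 0 ≤ β i := fun i => (hβpos i).le
  have hξ : ∀ i, 0 ≤ ξ i ω ∧ ξ i ω ≤ 1 := fun i => by rcases hξ01 i ω with h | h <;> simp [h]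
  rw [hζ, hH, tsum_mul_sum_sub_sum_eq_sum_tailSum_mul hβsummable _ hn]
  constructor
  · exact sum_nonneg fun i _ => mul_nonneg (tailSum_nonneg hβ _) (hξ i).1
  · calc ∑ i ∈ Icc 1 n, tailSum β (n - i) * ξ i ω
        ≤ ∑ i ∈ Icc 1 n, tailSum β (n - i) :=
          sum_le_sum fun i _ => mul_le_of_le_one_right (tailSum_nonneg hβ _) (hξ i).2
      _ = ∑ k ∈ range n, tailSum β k := sum_Icc_one_sub_eq_sum_range _ n
      _ ≤ ∑' j : ℕ, (j : ℝ) * β j := sum_range_tailSum_le hβ hβsummable hmoment n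

theorem stmt4
    {Ω : Type*} [MeasurableSpace Ω] (P : Measure Ω) [IsProbabilityMeasure P]
    (β : ℕ → ℝ) (hβpos : ∀ i, 0 < β i)
    (hβsummable : Summable β)
    (hβsum : ∑' i, β i < 1)
    (hmoment : Summable fun i : ℕ => (i : ℝ) * β i)
    (ξ : ℕ → Ω → ℝ) (hξmeas : ∀ n, Measurable (ξ n))
    (hξ01 : ∀ n ω, ξ n ω = 0 ∨ ξ n ω = 1)
    (F : ℕ → MeasurableSpace Ω)
    (hF : ∀ n, F n = ⨆ i ∈ Finset.Icc 1 n, MeasurableSpace.comap (ξ i) inferInstance)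
    (hξ1 : P {ω | ξ 1 ω = 1} = ENNReal.ofReal (β 0))
    (hcond : ∀ n, 2 ≤ n →
      P[ξ n|F (n - 1)] =ᵐ[P] fun ω => β 0 + ∑ i ∈ Finset.Icc 1 (n - 1), β (n - i) * ξ i ω)
    (H : ℕ → Ω → ℝ) (hH : ∀ n ω, H n ω = ∑ i ∈ Finset.Icc 1 n, ξ i ω)
    (ζ : ℕ → Ω → ℝ)
    (hζ : ∀ n ω, ζ n ω = (∑' j, β (j + 1)) * H n ω
      - ∑ i ∈ Finset.Icc 1 (n - 1), ∑ j ∈ Finset.Icc 1 (n - i), β j * ξ i ω) :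
    ∀ n, 1 ≤ n → ∀ᵐ ω ∂P, 0 ≤ ζ n ω ∧ ζ n ω ≤ ∑' j : ℕ, (j : ℝ) * β j :=
  stmt4_general P β hβpos hβsummable hmoment ξ hξ01 H hH ζ hζ
end

section
/- For every t ∈ ℝ and every n ≥ 2, the moment generating function of the DTHP satisfies the recursion E[e^{t H_n}] = E[e^{t H_{n−1}}] + (e^t − 1) · E[ e^{t H_{n−1}} (β_0 + Σ_{i=1}^{n−1} β_{n−i} ξ_i) ]. -/
/-!
Since `ξₙ ∈ {0, 1}`, `exp (t Hₙ) = exp (t Hₙ₋₁) (1 + (exp t - 1) ξₙ)` pointwise. Integrating, the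
only nontrivial term is `E[exp (t Hₙ₋₁) ξₙ]`; as `exp (t Hₙ₋₁)` is bounded and measurable for
`σ(ξ₁, …, ξₙ₋₁)`, it can be pulled out of the conditional expectation of `ξₙ` given that
σ-algebra, which is the intensity `β₀ + ∑ βₙ₋ᵢ ξᵢ`.
-/

open MeasureTheory Filter

section

variable {Ω : Type*} {m m₀ : MeasurableSpace Ω} {μ : Measure Ω}

theorem integral_mul_condExp_of_stronglyMeasurable_left [IsFiniteMeasure μ] (hm : m ≤ m₀)
    {f g : Ω → ℝ} (hf : StronglyMeasurable[m] f) (hfg : Integrable (f * g) μ)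
    (hg : Integrable g μ) :
    ∫ ω, f ω * (μ[g|m]) ω ∂μ = ∫ ω, f ω * g ω ∂μ :=
  calc ∫ ω, f ω * (μ[g|m]) ω ∂μ = ∫ ω, (μ[f * g|m]) ω ∂μ :=
        integral_congr_ae (condExp_mul_of_stronglyMeasurable_left hf hfg hg).symm
    _ = ∫ ω, f ω * g ω ∂μ := integral_condExp hm

theorem measurable_sum_iSup_comap {ι E : Type*} [MeasurableSpace E] [AddCommMonoid E]
    [MeasurableAdd₂ E] (s : Finset ι) (X : ι → Ω → E) :
    Measurable[⨆ i ∈ s, MeasurableSpace.comap (X i) inferInstance] fun ω => ∑ i ∈ s, X i ω :=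
  Finset.measurable_sum _ fun i hi =>
    (comap_measurable (X i)).mono (le_iSup₂ (f := fun j _ => MeasurableSpace.comap (X j) _) i hi)
      le_rfl

theorem integrable_exp_mul_sum [IsFiniteMeasure μ] {ι : Type*} (s : Finset ι)
    {X : ι → Ω → ℝ} (hX : ∀ i, Measurable (X i)) (hX_le : ∀ i ω, |X i ω| ≤ 1) (t : ℝ) :
    Integrable (fun ω => Real.exp (t * ∑ i ∈ s, X i ω)) μ := by
  have hmeas : Measurable fun ω => Real.exp (t * ∑ i ∈ s, X i ω) :=
    ((Finset.measurable_sum _ fun i _ => hX i).const_mul t).exp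
  refine Integrable.of_bound hmeas.aestronglyMeasurable (Real.exp (|t| * s.card))
    (ae_of_all _ fun ω => ?_)
  have hsum : |∑ i ∈ s, X i ω| ≤ s.card := by
    simpa using (Finset.abs_sum_le_sum_abs _ _).trans
      (Finset.sum_le_card_nsmul s _ 1 fun i _ => hX_le i ω)
  rw [Real.norm_eq_abs, Real.abs_exp, Real.exp_le_exp]
  exact (le_abs_self _).trans ((abs_mul _ _).trans_le (by gcongr))

end

theorem Real.exp_mul_add_of_eq_zero_or_eq_one (t a : ℝ) {x : ℝ} (hx : x = 0 ∨ x = 1) :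
    Real.exp (t * (a + x)) = Real.exp (t * a) + (Real.exp t - 1) * (Real.exp (t * a) * x) := by
  rcases hx with rfl | rfl
  · simp
  · rw [mul_add, mul_one, Real.exp_add]; ring

theorem stmt14_general
    {Ω : Type*} [MeasurableSpace Ω] (P : Measure Ω) [IsProbabilityMeasure P]
    (β : ℕ → ℝ)
    (ξ : ℕ → Ω → ℝ) (hξmeas : ∀ n, Measurable (ξ n))
    (hξ01 : ∀ n ω, ξ n ω = 0 ∨ ξ n ω = 1)
    (F : ℕ → MeasurableSpace Ω)
    (hF : ∀ n, F n = ⨆ i ∈ Finset.Icc 1 n, MeasurableSpace.comap (ξ i) inferInstance)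
    (hcond : ∀ n, 2 ≤ n →
      P[ξ n|F (n - 1)] =ᵐ[P] fun ω => β 0 + ∑ i ∈ Finset.Icc 1 (n - 1), β (n - i) * ξ i ω)
    (H : ℕ → Ω → ℝ) (hH : ∀ n ω, H n ω = ∑ i ∈ Finset.Icc 1 n, ξ i ω) :
    ∀ t : ℝ, ∀ n, 2 ≤ n →
      ∫ ω, Real.exp (t * H n ω) ∂P
        = (∫ ω, Real.exp (t * H (n - 1) ω) ∂P)
          + (Real.exp t - 1)
            * ∫ ω, Real.exp (t * H (n - 1) ω)
                * (β 0 + ∑ i ∈ Finset.Icc 1 (n - 1), β (n - i) * ξ i ω) ∂P := by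
  obtain rfl : H = fun n ω => ∑ i ∈ Finset.Icc 1 n, ξ i ω := funext fun n => funext (hH n)
  obtain rfl : F = fun n => ⨆ i ∈ Finset.Icc 1 n, MeasurableSpace.comap (ξ i) inferInstance :=
    funext hF
  intro t n hn
  obtain ⟨k, rfl⟩ : ∃ k, n = k + 1 := ⟨n - 1, by omega⟩
  have hcondk := hcond (k + 1) hn
  simp only [Nat.add_sub_cancel] at hcondk ⊢
  have hξ_le : ∀ i ω, |ξ i ω| ≤ 1 := fun i ω => by rcases hξ01 i ω with h | h <;> simp [h]
  set f := fun ω => Real.exp (t * ∑ i ∈ Finset.Icc 1 k, ξ i ω)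
  have hf_meas : StronglyMeasurable[⨆ i ∈ Finset.Icc 1 k,
      MeasurableSpace.comap (ξ i) inferInstance] f :=
    ((measurable_sum_iSup_comap _ ξ).const_mul t).exp.stronglyMeasurable
  have hf_int : Integrable f P := integrable_exp_mul_sum _ hξmeas hξ_le t
  have hξ_int : Integrable (ξ (k + 1)) P :=
    .of_bound (hξmeas _).aestronglyMeasurable 1 (ae_of_all _ (hξ_le _))
  have hfξ_int : Integrable (fun ω => f ω * ξ (k + 1) ω) P :=
    hf_int.mul_bdd (hξmeas _).aestronglyMeasurable (ae_of_all _ (hξ_le _))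
  calc ∫ ω, Real.exp (t * ∑ i ∈ Finset.Icc 1 (k + 1), ξ i ω) ∂P
      = ∫ ω, f ω + (Real.exp t - 1) * (f ω * ξ (k + 1) ω) ∂P := by
        congr with ω
        rw [Finset.sum_Icc_succ_top (by omega)]
        exact Real.exp_mul_add_of_eq_zero_or_eq_one t _ (hξ01 _ ω)
    _ = ∫ ω, f ω ∂P + (Real.exp t - 1) * ∫ ω, f ω * ξ (k + 1) ω ∂P := by
        rw [integral_add hf_int (hfξ_int.const_mul _), integral_const_mul]
    _ = _ := by
        rw [← integral_mul_condExp_of_stronglyMeasurable_left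
          (iSup₂_le fun i _ => (hξmeas i).comap_le) hf_meas hfξ_int hξ_int]
        congr 2
        exact integral_congr_ae (hcondk.mono fun ω hω => congrArg (f ω * ·) hω)

theorem stmt14
    {Ω : Type*} [MeasurableSpace Ω] (P : Measure Ω) [IsProbabilityMeasure P]
    (β : ℕ → ℝ) (hβpos : ∀ i, 0 < β i)
    (hβsummable : Summable β)
    (hβsum : ∑' i, β i < 1)
    (ξ : ℕ → Ω → ℝ) (hξmeas : ∀ n, Measurable (ξ n))
    (hξ01 : ∀ n ω, ξ n ω = 0 ∨ ξ n ω = 1)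
    (F : ℕ → MeasurableSpace Ω)
    (hF : ∀ n, F n = ⨆ i ∈ Finset.Icc 1 n, MeasurableSpace.comap (ξ i) inferInstance)
    (hξ1 : P {ω | ξ 1 ω = 1} = ENNReal.ofReal (β 0))
    (hcond : ∀ n, 2 ≤ n →
      P[ξ n|F (n - 1)] =ᵐ[P] fun ω => β 0 + ∑ i ∈ Finset.Icc 1 (n - 1), β (n - i) * ξ i ω)
    (H : ℕ → Ω → ℝ) (hH : ∀ n ω, H n ω = ∑ i ∈ Finset.Icc 1 n, ξ i ω) :
    ∀ t : ℝ, ∀ n, 2 ≤ n →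
      ∫ ω, Real.exp (t * H n ω) ∂P
        = (∫ ω, Real.exp (t * H (n - 1) ω) ∂P)
          + (Real.exp t - 1)
            * ∫ ω, Real.exp (t * H (n - 1) ω)
                * (β 0 + ∑ i ∈ Finset.Icc 1 (n - 1), β (n - i) * ξ i ω) ∂P :=
  stmt14_general P β ξ hξmeas hξ01 F hF hcond H hH
end

section
/- For every t > 0 and every n ≥ 1, E[e^{t H_n}] ≥ (1 − β_0 + β_0 e^t)^n; equivalently, the scaled logarithmic moment generating function Γ_n(t) = (1/n) log E[e^{t H_n}] satisfies Γ_n(t) ≥ log(1 − β_0 + β_0 e^t). -/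
/-!
As `ξ (n + 1)` takes only the values `0` and `1`,
`exp (t * H (n + 1)) = exp (t * H n) * (1 + (exp t - 1) * ξ (n + 1))`.
The factor `exp (t * H n)` is `F n`-measurable, nonnegative and bounded, so it can be pulled
out of the conditional expectation given `F n`; the conditional success probability is at least
`β 0` because the excitation terms `β (n + 1 - i) * ξ i` are nonnegative (for `n = 0`, `F 0` is
trivial and the success probability is exactly `β 0`). This gives
`E[exp (t * H (n + 1))] ≥ (1 - β 0 + β 0 * exp t) * E[exp (t * H n)]` for `t ≥ 0`,
and the bound follows by induction.
-/

open MeasureTheory Filter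

section General

variable {Ω : Type*} {m mΩ : MeasurableSpace Ω} {μ : Measure Ω}

lemma mul_integral_le_integral_mul_of_le_condExp [IsFiniteMeasure μ] (hm : m ≤ mΩ)
    {f g : Ω → ℝ} {c C : ℝ} (hf : StronglyMeasurable[m] f) (hf0 : 0 ≤ f) (hfC : ∀ ω, f ω ≤ C)
    (hg : Integrable g μ) (hc : ∀ᵐ ω ∂μ, c ≤ μ[g|m] ω) :
    c * ∫ ω, f ω ∂μ ≤ ∫ ω, f ω * g ω ∂μ := by
  have hf_bound : ∀ᵐ ω ∂μ, ‖f ω‖ ≤ C :=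
    ae_of_all _ fun ω => (Real.norm_of_nonneg (hf0 ω)).trans_le (hfC ω)
  have hf_meas : AEStronglyMeasurable f μ := (hf.mono hm).aestronglyMeasurable
  calc c * ∫ ω, f ω ∂μ = ∫ ω, f ω * c ∂μ := by rw [integral_mul_const, mul_comm]
    _ ≤ ∫ ω, f ω * μ[g|m] ω ∂μ := by
      refine integral_mono_ae ((Integrable.of_bound hf_meas C hf_bound).mul_const c)
        (integrable_condExp.bdd_mul hf_meas hf_bound) ?_
      filter_upwards [hc] with ω hω using mul_le_mul_of_nonneg_left hω (hf0 ω)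
    _ = ∫ ω, μ[f * g|m] ω ∂μ :=
      integral_congr_ae (condExp_stronglyMeasurable_mul_of_bound hm hf hg C hf_bound).symm
    _ = ∫ ω, f ω * g ω ∂μ := integral_condExp hm

lemma integral_eq_measureReal_of_zero_or_one {f : Ω → ℝ} (hf : Measurable f)
    (h01 : ∀ ω, f ω = 0 ∨ f ω = 1) : ∫ ω, f ω ∂μ = μ.real {ω | f ω = 1} := by
  have hf_eq : f = {ω | f ω = 1}.indicator 1 := by
    funext ω
    rcases h01 ω with h | h <;> simp [h]
  conv_lhs => rw [hf_eq]
  exact integral_indicator_one (hf (measurableSet_singleton 1))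

lemma biSup_comap_le {ι β : Type*} [MeasurableSpace β] {f : ι → Ω → β}
    (hf : ∀ i, Measurable (f i)) (s : Finset ι) :
    ⨆ i ∈ s, MeasurableSpace.comap (f i) inferInstance ≤ mΩ :=
  iSup₂_le fun i _ => (hf i).comap_le

lemma measurable_biSup_comap {ι β : Type*} [MeasurableSpace β] {f : ι → Ω → β} {s : Finset ι}
    {i : ι} (hi : i ∈ s) : Measurable[⨆ j ∈ s, MeasurableSpace.comap (f j) inferInstance] (f i) :=
  Measurable.of_comap_le <|
    le_iSup₂ (f := fun j (_ : j ∈ s) => MeasurableSpace.comap (f j) inferInstance) i hi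

lemma Real.exp_mul_of_zero_or_one {x : ℝ} (hx : x = 0 ∨ x = 1) (t : ℝ) :
    Real.exp (t * x) = 1 + (Real.exp t - 1) * x := by
  rcases hx with rfl | rfl <;> simp

end General

section Comparison

variable {Ω : Type*} {mΩ : MeasurableSpace Ω} {P : Measure Ω} [IsProbabilityMeasure P]
  {F : ℕ → MeasurableSpace Ω} {ξ : ℕ → Ω → ℝ} {p : ℝ}

lemma sum_Icc_le_of_zero_or_one (hξ01 : ∀ n ω, ξ n ω = 0 ∨ ξ n ω = 1) (n : ℕ) (ω : Ω) :
    ∑ i ∈ Finset.Icc 1 n, ξ i ω ≤ n := by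
  calc ∑ i ∈ Finset.Icc 1 n, ξ i ω ≤ ∑ _i ∈ Finset.Icc 1 n, (1 : ℝ) :=
        Finset.sum_le_sum fun i _ => by rcases hξ01 i ω with h | h <;> simp [h]
    _ = n := by simp

lemma mul_integral_exp_sum_le_integral_exp_sum_succ (hF : ∀ n, F n ≤ mΩ)
    (hadapted : ∀ n, ∀ i ∈ Finset.Icc 1 n, Measurable[F n] (ξ i))
    (hξmeas : ∀ n, Measurable (ξ n)) (hξ01 : ∀ n ω, ξ n ω = 0 ∨ ξ n ω = 1)
    (hcond : ∀ n, ∀ᵐ ω ∂P, p ≤ P[ξ (n + 1)|F n] ω) {t : ℝ} (ht : 0 ≤ t) (n : ℕ) :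
    (1 - p + p * Real.exp t) * ∫ ω, Real.exp (t * ∑ i ∈ Finset.Icc 1 n, ξ i ω) ∂P ≤
      ∫ ω, Real.exp (t * ∑ i ∈ Finset.Icc 1 (n + 1), ξ i ω) ∂P := by
  set Y : Ω → ℝ := fun ω => Real.exp (t * ∑ i ∈ Finset.Icc 1 n, ξ i ω)
  have hY : StronglyMeasurable[F n] Y :=
    (Real.measurable_exp.comp
      ((Finset.measurable_sum _ (hadapted n)).const_mul t)).stronglyMeasurable
  have hY_le : ∀ ω, Y ω ≤ Real.exp (t * n) := fun ω =>
    Real.exp_le_exp.mpr (mul_le_mul_of_nonneg_left (sum_Icc_le_of_zero_or_one hξ01 n ω) ht)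
  have hY_bound : ∀ᵐ ω ∂P, ‖Y ω‖ ≤ Real.exp (t * n) :=
    ae_of_all _ fun ω => (Real.norm_of_nonneg (Real.exp_pos _).le).trans_le (hY_le ω)
  have hY_int : Integrable Y P :=
    Integrable.of_bound (hY.mono (hF n)).aestronglyMeasurable _ hY_bound
  have hξ_int : Integrable (ξ (n + 1)) P :=
    Integrable.of_bound (hξmeas _).aestronglyMeasurable 1 (ae_of_all _ fun ω => by
      rcases hξ01 (n + 1) ω with h | h <;> simp [h])
  have hsplit : ∀ ω, Real.exp (t * ∑ i ∈ Finset.Icc 1 (n + 1), ξ i ω) =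
      Y ω + (Real.exp t - 1) * (Y ω * ξ (n + 1) ω) := fun ω => by
    rw [Finset.sum_Icc_succ_top (by omega), mul_add, Real.exp_add,
      Real.exp_mul_of_zero_or_one (hξ01 _ ω)]
    ring
  have hcorr : p * ∫ ω, Y ω ∂P ≤ ∫ ω, Y ω * ξ (n + 1) ω ∂P :=
    mul_integral_le_integral_mul_of_le_condExp (hF n) hY (fun ω => (Real.exp_pos _).le) hY_le
      hξ_int (hcond n)
  have hexp : 0 ≤ Real.exp t - 1 := by linarith [Real.one_le_exp ht]
  simp_rw [hsplit]
  rw [integral_add hY_int ((hξ_int.bdd_mul hY_int.aestronglyMeasurable hY_bound).const_mul _),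
    integral_const_mul]
  linarith [mul_le_mul_of_nonneg_left hcorr hexp]

theorem pow_le_integral_exp_sum_of_le_condExp (hF : ∀ n, F n ≤ mΩ)
    (hadapted : ∀ n, ∀ i ∈ Finset.Icc 1 n, Measurable[F n] (ξ i))
    (hξmeas : ∀ n, Measurable (ξ n)) (hξ01 : ∀ n ω, ξ n ω = 0 ∨ ξ n ω = 1)
    (hp : 0 ≤ p) (hcond : ∀ n, ∀ᵐ ω ∂P, p ≤ P[ξ (n + 1)|F n] ω) {t : ℝ} (ht : 0 ≤ t) (n : ℕ) :
    (1 - p + p * Real.exp t) ^ n ≤ ∫ ω, Real.exp (t * ∑ i ∈ Finset.Icc 1 n, ξ i ω) ∂P := by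
  induction n with
  | zero => simp
  | succ n ih =>
    have hc : 0 ≤ 1 - p + p * Real.exp t := by nlinarith [Real.one_le_exp ht]
    calc (1 - p + p * Real.exp t) ^ (n + 1)
        = (1 - p + p * Real.exp t) * (1 - p + p * Real.exp t) ^ n := pow_succ' _ _
      _ ≤ (1 - p + p * Real.exp t) * ∫ ω, Real.exp (t * ∑ i ∈ Finset.Icc 1 n, ξ i ω) ∂P :=
        mul_le_mul_of_nonneg_left ih hc
      _ ≤ _ := mul_integral_exp_sum_le_integral_exp_sum_succ hF hadapted hξmeas hξ01 hcond ht n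

end Comparison

section Model

variable {Ω : Type*} {mΩ : MeasurableSpace Ω} {P : Measure Ω} [IsProbabilityMeasure P]
  {β : ℕ → ℝ} {ξ : ℕ → Ω → ℝ} {F : ℕ → MeasurableSpace Ω}

lemma beta_zero_le_condExp (hβpos : ∀ i, 0 < β i) (hξmeas : ∀ n, Measurable (ξ n))
    (hξ01 : ∀ n ω, ξ n ω = 0 ∨ ξ n ω = 1)
    (hF : ∀ n, F n = ⨆ i ∈ Finset.Icc 1 n, MeasurableSpace.comap (ξ i) inferInstance)
    (hξ1 : P {ω | ξ 1 ω = 1} = ENNReal.ofReal (β 0))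
    (hcond : ∀ n, 2 ≤ n →
      P[ξ n|F (n - 1)] =ᵐ[P] fun ω => β 0 + ∑ i ∈ Finset.Icc 1 (n - 1), β (n - i) * ξ i ω)
    (n : ℕ) : ∀ᵐ ω ∂P, β 0 ≤ P[ξ (n + 1)|F n] ω := by
  rcases n with _ | n
  · have hF0 : F 0 = ⊥ := by simp [hF 0]
    rw [hF0, condExp_bot, integral_eq_measureReal_of_zero_or_one (hξmeas 1) (hξ01 1),
      measureReal_def, hξ1, ENNReal.toReal_ofReal (hβpos 0).le]
    exact ae_of_all _ fun _ => le_rfl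
  · filter_upwards [hcond (n + 1 + 1) (by omega)] with ω hω
    rw [Nat.add_sub_cancel] at hω
    rw [hω]
    refine le_add_of_nonneg_right (Finset.sum_nonneg fun i _ => ?_)
    rcases hξ01 i ω with h | h <;> simp [h, (hβpos _).le]

end Model

theorem stmt16_general
    {Ω : Type*} [MeasurableSpace Ω] (P : Measure Ω) [IsProbabilityMeasure P]
    (β : ℕ → ℝ) (hβpos : ∀ i, 0 < β i)
    (ξ : ℕ → Ω → ℝ) (hξmeas : ∀ n, Measurable (ξ n))
    (hξ01 : ∀ n ω, ξ n ω = 0 ∨ ξ n ω = 1)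
    (F : ℕ → MeasurableSpace Ω)
    (hF : ∀ n, F n = ⨆ i ∈ Finset.Icc 1 n, MeasurableSpace.comap (ξ i) inferInstance)
    (hξ1 : P {ω | ξ 1 ω = 1} = ENNReal.ofReal (β 0))
    (hcond : ∀ n, 2 ≤ n →
      P[ξ n|F (n - 1)] =ᵐ[P] fun ω => β 0 + ∑ i ∈ Finset.Icc 1 (n - 1), β (n - i) * ξ i ω)
    (H : ℕ → Ω → ℝ) (hH : ∀ n ω, H n ω = ∑ i ∈ Finset.Icc 1 n, ξ i ω)
    (Γ : ℕ → ℝ → ℝ)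
    (hΓ : ∀ n t, Γ n t = (1 / (n : ℝ)) * Real.log (∫ ω, Real.exp (t * H n ω) ∂P)) :
    ∀ t : ℝ, 0 < t → ∀ n, 1 ≤ n →
      ((1 - β 0 + β 0 * Real.exp t) ^ n ≤ ∫ ω, Real.exp (t * H n ω) ∂P) ∧
        Real.log (1 - β 0 + β 0 * Real.exp t) ≤ Γ n t := by
  intro t ht n hn
  have hmgf : (1 - β 0 + β 0 * Real.exp t) ^ n ≤ ∫ ω, Real.exp (t * H n ω) ∂P := by
    simp only [hH]
    exact pow_le_integral_exp_sum_of_le_condExp (fun n => hF n ▸ biSup_comap_le hξmeas _)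
      (fun n _ hi => hF n ▸ measurable_biSup_comap hi) hξmeas hξ01 (hβpos 0).le
      (beta_zero_le_condExp hβpos hξmeas hξ01 hF hξ1 hcond) ht.le n
  refine ⟨hmgf, ?_⟩
  have hc : 0 < 1 - β 0 + β 0 * Real.exp t := by nlinarith [Real.one_lt_exp_iff.mpr ht, hβpos 0]
  have hn' : (0 : ℝ) < n := by exact_mod_cast hn
  rw [hΓ, one_div, le_inv_mul_iff₀ hn', ← Real.log_pow]
  exact Real.log_le_log (pow_pos hc n) hmgf

theorem stmt16
    {Ω : Type*} [MeasurableSpace Ω] (P : Measure Ω) [IsProbabilityMeasure P]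
    (β : ℕ → ℝ) (hβpos : ∀ i, 0 < β i)
    (hβsummable : Summable β)
    (hβsum : ∑' i, β i < 1)
    (ξ : ℕ → Ω → ℝ) (hξmeas : ∀ n, Measurable (ξ n))
    (hξ01 : ∀ n ω, ξ n ω = 0 ∨ ξ n ω = 1)
    (F : ℕ → MeasurableSpace Ω)
    (hF : ∀ n, F n = ⨆ i ∈ Finset.Icc 1 n, MeasurableSpace.comap (ξ i) inferInstance)
    (hξ1 : P {ω | ξ 1 ω = 1} = ENNReal.ofReal (β 0))
    (hcond : ∀ n, 2 ≤ n →
      P[ξ n|F (n - 1)] =ᵐ[P] fun ω => β 0 + ∑ i ∈ Finset.Icc 1 (n - 1), β (n - i) * ξ i ω)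
    (H : ℕ → Ω → ℝ) (hH : ∀ n ω, H n ω = ∑ i ∈ Finset.Icc 1 n, ξ i ω)
    (Γ : ℕ → ℝ → ℝ)
    (hΓ : ∀ n t, Γ n t = (1 / (n : ℝ)) * Real.log (∫ ω, Real.exp (t * H n ω) ∂P)) :
    ∀ t : ℝ, 0 < t → ∀ n, 1 ≤ n →
      ((1 - β 0 + β 0 * Real.exp t) ^ n ≤ ∫ ω, Real.exp (t * H n ω) ∂P) ∧
        Real.log (1 - β 0 + β 0 * Real.exp t) ≤ Γ n t :=
  stmt16_general P β hβpos ξ hξmeas hξ01 F hF hξ1 hcond H hH Γ hΓ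
end
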